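/- Fix an even integer j ≥ 2. There exist a constant C > 0 and an integer N such that for every integer n ≥ N and every integer w with 0 ≤ w ≤ n, one has K_j(w) ≥ −C · n^{j/2}. (Equivalently, since the eigenvalues of the distance-j binary Hamming graph H(n, j) are exactly the values K_j(w) for integers 0 ≤ w ≤ n, the smallest eigenvalue of H(n, j) satisfies |λ_min(H(n, j))| = O(n^{j/2}) for fixed even j.) -/
import Mathlib

open Polynomial Finset


/-- The binary Krawtchouk polynomial `K_j` with parameter `n`, as a real
function: `K_j(x) = Σ_{i=0}^{j} (-1)^i C(x,i) C(n-x, j-i)` where `C(y,i)` is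
the generalized binomial coefficient. -/
noncomputable def krawF (n j : ℕ) (x : ℝ) : ℝ :=
  ∑ i ∈ Finset.range (j + 1),
    (-1 : ℝ) ^ i * ((descPochhammer ℝ i).eval x / (i.factorial : ℝ)) *
      ((descPochhammer ℝ (j - i)).eval ((n : ℝ) - x) / ((j - i).factorial : ℝ))

/-- for fixed even `j ≥ 2` the smallest eigenvalue of `H(n,j)`
satisfies `|λ_min| = O(n^{j/2})`, i.e. `K_j(w) ≥ -C n^{j/2}` for all
`0 ≤ w ≤ n` and `n` large. -/



lemma coeff_helper (r : ℤ) (d w k : ℕ) (hd : 0 < d) :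
    ((1 + C r * X ^ d : ℤ[X]) ^ w).coeff k =
      if d ∣ k then r ^ (k / d) * (w.choose (k / d)) else 0 := by
  rw [add_comm (1 : ℤ[X]), add_pow]
  have hterm : ∀ i, ((C r * X ^ d) ^ i * (1:ℤ[X]) ^ (w - i) * (w.choose i : ℤ[X])).coeff k
      = if k = d * i then r ^ i * (w.choose i) else 0 := by
    intro i
    rw [one_pow, mul_one, mul_pow, ← C_pow, ← pow_mul, ← C_eq_natCast, mul_right_comm,
      ← C_mul, coeff_C_mul, coeff_X_pow]
    rw [mul_ite, mul_one, mul_zero]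
  rw [finset_sum_coeff]
  simp only [hterm]
  by_cases hdk : d ∣ k
  · obtain ⟨a, rfl⟩ := hdk
    rw [if_pos ⟨a, rfl⟩, Nat.mul_div_cancel_left _ hd]
    by_cases haw : a ≤ w
    · rw [Finset.sum_eq_single a]
      · simp
      · intro b _ hb
        exact if_neg (fun h => hb (Nat.eq_of_mul_eq_mul_left hd h).symm)
      · intro h; exact absurd (Finset.mem_range.2 (by omega)) h
    · rw [Finset.sum_eq_zero, Nat.choose_eq_zero_of_lt (by omega), Nat.cast_zero, mul_zero]
      intro b hb
      refine if_neg (fun h => ?_)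
      have := Nat.eq_of_mul_eq_mul_left hd h
      simp only [Finset.mem_range] at hb
      omega
  · rw [if_neg hdk, Finset.sum_eq_zero]
    intro b _
    exact if_neg (fun h => hdk ⟨b, h⟩)

/-- The Krawtchouk value as an integer. -/
def Kz (n j w : ℕ) : ℤ :=
  ∑ i ∈ Finset.range (j+1), (-1:ℤ)^i * (w.choose i) * ((n-w).choose (j-i))

lemma one_sub_X_eq : (1 - X : ℤ[X]) = 1 + C (-1) * X ^ 1 := by
  rw [map_neg, C_1]; ring

lemma one_sub_X_sq_eq : (1 - X^2 : ℤ[X]) = 1 + C (-1) * X ^ 2 := by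
  rw [map_neg, C_1]; ring

lemma Kz_eq_coeff (n j w : ℕ) :
    Kz n j w = ((1 - X : ℤ[X]) ^ w * (1 + X) ^ (n - w)).coeff j := by
  rw [coeff_mul, Finset.Nat.sum_antidiagonal_eq_sum_range_succ_mk]
  refine Finset.sum_congr rfl fun i _ => ?_
  rw [one_sub_X_eq, coeff_helper _ _ _ _ one_pos, coeff_one_add_X_pow]
  simp [Nat.div_one]

lemma factor_eq (n w : ℕ) (h : 2*w ≤ n) :
    ((1 - X : ℤ[X]) ^ w * (1 + X) ^ (n - w)) = (1 - X^2)^w * (1+X)^(n - 2*w) := by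
  have hnw : n - w = w + (n - 2*w) := by omega
  rw [hnw, pow_add, ← mul_assoc, ← mul_pow]
  congr 2
  ring

lemma coeff2 (t s w : ℕ) :
    ((1 - X^2 : ℤ[X])^w * (1+X)^s).coeff (2*t)
      = ∑ a ∈ Finset.range (t+1), (-1:ℤ)^a * (w.choose a) * (s.choose (2*t - 2*a)) := by
  rw [coeff_mul, Finset.Nat.sum_antidiagonal_eq_sum_range_succ_mk]
  simp only [one_sub_X_sq_eq, coeff_helper _ _ _ _ (by norm_num : (0:ℕ) < 2),
    coeff_one_add_X_pow]
  symm
  have hinj : ∀ x ∈ Finset.range (t+1), ∀ y ∈ Finset.range (t+1), 2*x = 2*y → x = y := by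
    intro x _ y _ h; omega
  calc ∑ a ∈ Finset.range (t+1), (-1:ℤ)^a * (w.choose a) * (s.choose (2*t - 2*a))
      = ∑ a ∈ Finset.range (t+1),
          (if 2 ∣ 2*a then (-1:ℤ)^(2*a/2) * (w.choose (2*a/2)) else 0) * (s.choose (2*t - 2*a)) := by
        refine Finset.sum_congr rfl fun a _ => ?_
        rw [if_pos ⟨a, rfl⟩, Nat.mul_div_cancel_left _ (by norm_num : (0:ℕ) < 2)]
    _ = ∑ k ∈ (Finset.range (t+1)).image (fun a => 2*a),
          (if 2 ∣ k then (-1:ℤ)^(k/2) * (w.choose (k/2)) else 0) * (s.choose (2*t - k)) := by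
        rw [Finset.sum_image hinj]
    _ = ∑ k ∈ Finset.range (2*t+1),
          (if 2 ∣ k then (-1:ℤ)^(k/2) * (w.choose (k/2)) else 0) * (s.choose (2*t - k)) := by
        refine Finset.sum_subset ?_ ?_
        · intro k hk
          simp only [Finset.mem_image, Finset.mem_range] at hk ⊢
          obtain ⟨a, ha, rfl⟩ := hk; omega
        · intro k hk hk2
          simp only [Finset.mem_image, Finset.mem_range] at hk hk2
          rw [if_neg, zero_mul]
          rintro ⟨a, rfl⟩
          exact hk2 ⟨a, by omega, rfl⟩

lemma Kz_formula (n t w : ℕ) (hw : 2*w ≤ n) :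
    Kz n (2*t) w
      = ∑ a ∈ Finset.range (t+1), (-1:ℤ)^a * (w.choose a) * ((n-2*w).choose (2*t - 2*a)) := by
  rw [Kz_eq_coeff, factor_eq n w hw, coeff2]

lemma krawF_eq (n j w : ℕ) (hw : w ≤ n) :
    krawF n j (w : ℝ) = ((Kz n j w : ℤ) : ℝ) := by
  unfold krawF Kz
  push_cast
  refine Finset.sum_congr rfl fun i _ => ?_
  have hnw : (n:ℝ) - (w:ℝ) = ((n - w : ℕ) : ℝ) := by
    rw [Nat.cast_sub hw]
  rw [hnw, descPochhammer_eval_eq_descFactorial, descPochhammer_eval_eq_descFactorial,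
    Nat.descFactorial_eq_factorial_mul_choose, Nat.descFactorial_eq_factorial_mul_choose]
  have h1 : ((i.factorial : ℝ)) ≠ 0 := Nat.cast_ne_zero.2 i.factorial_ne_zero
  have h2 : (((j-i).factorial : ℝ)) ≠ 0 := Nat.cast_ne_zero.2 (j-i).factorial_ne_zero
  push_cast
  field_simp

lemma Kz_symm (n j w : ℕ) (hw : w ≤ n) (hje : Even j) :
    Kz n j (n - w) = Kz n j w := by
  unfold Kz
  rw [← Finset.sum_range_reflect]
  refine Finset.sum_congr rfl fun i hi => ?_
  simp only [Finset.mem_range] at hi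
  have hij : i ≤ j := by omega
  have e1 : j + 1 - 1 - i = j - i := by omega
  have e2 : n - (n - w) = w := by omega
  have e3 : j - (j - i) = i := by omega
  have e4 : (-1:ℤ)^(j-i) = (-1)^i := by
    have hpar : Even (j - i) ↔ Even i := by
      rw [Nat.even_sub hij]
      exact ⟨fun h => h.1 hje, fun h => ⟨fun _ => h, fun _ => hje⟩⟩
    by_cases hei : Even i
    · rw [(hpar.2 hei).neg_one_pow, hei.neg_one_pow]
    · rw [(Nat.not_even_iff_odd.1 (fun h => hei (hpar.1 h))).neg_one_pow,
        (Nat.not_even_iff_odd.1 hei).neg_one_pow]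
  rw [e1, e2, e3, e4]
  ring

lemma alt_sum : ∀ (m : ℕ) (T : ℕ → ℤ), (∀ a, a < m → 0 ≤ T a) →
    (∀ a, a + 1 < m → T (a+1) ≤ T a) →
    0 ≤ ∑ a ∈ Finset.range m, (-1:ℤ)^a * T a ∧
      (0 < m → ∑ a ∈ Finset.range m, (-1:ℤ)^a * T a ≤ T 0) := by
  intro m
  induction m with
  | zero => intro T _ _; simp
  | succ m ih =>
    intro T h0 h1
    have key : ∑ a ∈ Finset.range (m+1), (-1:ℤ)^a * T a
        = T 0 - ∑ a ∈ Finset.range m, (-1:ℤ)^a * T (a+1) := by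
      rw [Finset.sum_range_succ']
      have : ∀ a ∈ Finset.range m, (-1:ℤ)^(a+1) * T (a+1) = -((-1:ℤ)^a * T (a+1)) := by
        intro a _; ring
      rw [Finset.sum_congr rfl this, Finset.sum_neg_distrib]
      simp
      ring
    obtain ⟨l, u⟩ := ih (fun a => T (a+1)) (fun a ha => h0 (a+1) (by omega))
      (fun a ha => h1 (a+1) (by omega))
    constructor
    · rw [key]
      rcases Nat.eq_zero_or_pos m with rfl | hm
      · simpa using h0 0 (by omega)
      · have hu := u hm
        have hT10 : T 1 ≤ T 0 := h1 0 (by omega)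
        linarith
    · intro _
      rw [key]
      linarith

lemma T_mono (t w s n a : ℕ) (ht : 1 ≤ t) (hn : 1 ≤ n) (hw : w ≤ n)
    (hs : 16*t*t*n < s*s) (ha : a < t) :
    (w.choose (a+1)) * (s.choose (2*t - 2*(a+1))) ≤ (w.choose a) * (s.choose (2*t - 2*a)) := by
  have hs4 : 4*t < s := by
    by_contra hcon
    push_neg at hcon
    have : s*s ≤ (4*t)*(4*t) := Nat.mul_le_mul hcon hcon
    have h16 : (4*t)*(4*t) = 16*t*t*1 := by ring
    have : 16*t*t*1 ≤ 16*t*t*n := Nat.mul_le_mul_left _ hn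
    omega
  -- key quantitative inequality
  have e1 : s ≤ 2*(s-2*t) := by omega
  have e2 : s*s ≤ (2*(s-2*t))*(2*(s-2*t)) := Nat.mul_le_mul e1 e1
  have e3 : 4*(4*(t*t*n)) < 4*((s-2*t)*(s-2*t)) := by
    have h1 : 4*(4*(t*t*n)) = 16*t*t*n := by ring
    have h2 : (2*(s-2*t))*(2*(s-2*t)) = 4*((s-2*t)*(s-2*t)) := by ring
    omega
  have key : 4*(t*t*n) < (s-2*t)*(s-2*t) := lt_of_mul_lt_mul_left e3 (Nat.zero_le 4)
  set m : ℕ := 2*t - 2*(a+1) with hm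
  have hm2 : 2*t - 2*a = m + 2 := by omega
  have hmle : m + 2 ≤ 2*t := by omega
  rw [hm2]
  -- core inequality
  have core : (w-a)*((m+1)*(m+2)) ≤ (a+1)*((s-m)*(s-(m+1))) := by
    calc (w-a)*((m+1)*(m+2)) ≤ n*((2*t)*(2*t)) :=
          Nat.mul_le_mul (by omega) (Nat.mul_le_mul (by omega) (by omega))
      _ = 4*(t*t*n) := by ring
      _ ≤ (s-2*t)*(s-2*t) := key.le
      _ ≤ (s-m)*(s-(m+1)) := Nat.mul_le_mul (by omega) (by omega)
      _ ≤ (a+1)*((s-m)*(s-(m+1))) := Nat.le_mul_of_pos_left _ (by omega)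
  have big : (w.choose (a+1) * s.choose m) * ((a+1)*((m+1)*(m+2)))
      ≤ (w.choose a * s.choose (m+2)) * ((a+1)*((m+1)*(m+2))) := by
    calc (w.choose (a+1) * s.choose m) * ((a+1)*((m+1)*(m+2)))
        = (w.choose (a+1) * (a+1)) * (s.choose m * ((m+1)*(m+2))) := by ring
      _ = (w.choose a * (w-a)) * (s.choose m * ((m+1)*(m+2))) := by
          rw [Nat.choose_succ_right_eq]
      _ = (w.choose a * s.choose m) * ((w-a)*((m+1)*(m+2))) := by ring
      _ ≤ (w.choose a * s.choose m) * ((a+1)*((s-m)*(s-(m+1)))) :=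
          Nat.mul_le_mul_left _ core
      _ = (w.choose a * (a+1)) * ((s.choose m * (s-m)) * (s-(m+1))) := by ring
      _ = (w.choose a * (a+1)) * ((s.choose (m+1) * (m+1)) * (s-(m+1))) := by
          rw [Nat.choose_succ_right_eq]
      _ = (w.choose a * (a+1)) * ((s.choose (m+1) * (s-(m+1))) * (m+1)) := by ring
      _ = (w.choose a * (a+1)) * ((s.choose (m+2) * (m+2)) * (m+1)) := by
          rw [Nat.choose_succ_right_eq s (m+1)]
      _ = (w.choose a * s.choose (m+2)) * ((a+1)*((m+1)*(m+2))) := by ring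
  exact Nat.le_of_mul_le_mul_right big (by positivity)

lemma term_bound (t w s n a : ℕ) (ht : 1 ≤ t) (hw : w ≤ n) (ha : a ≤ t) (hs : s*s ≤ 16*t*t*n) :
    (w.choose a) * (s.choose (2*t - 2*a)) ≤ (16*t*t)^t * n^t := by
  have h2 : 2*t - 2*a = 2*(t-a) := by omega
  calc (w.choose a) * (s.choose (2*t - 2*a)) ≤ w^a * s^(2*t-2*a) :=
        Nat.mul_le_mul (Nat.choose_le_pow _ _) (Nat.choose_le_pow _ _)
    _ = w^a * (s*s)^(t-a) := by rw [h2, pow_mul, sq]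
    _ ≤ n^a * (16*t*t*n)^(t-a) :=
        Nat.mul_le_mul (Nat.pow_le_pow_left hw _) (Nat.pow_le_pow_left hs _)
    _ = (16*t*t)^(t-a) * (n^a * n^(t-a)) := by rw [mul_pow]; ring
    _ = (16*t*t)^(t-a) * n^t := by rw [← pow_add, Nat.add_sub_cancel' ha]
    _ ≤ (16*t*t)^t * n^t := by
        apply Nat.mul_le_mul_right
        exact Nat.pow_le_pow_right (by nlinarith) (by omega)


lemma Kz_main (t n u : ℕ) (ht : 1 ≤ t) (hn : 1 ≤ n) (hu : 2*u ≤ n) :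
    -( ((t+1) * ((16*t*t)^t * n^t) : ℕ) : ℤ) ≤ Kz n (2*t) u := by
  rw [Kz_formula n t u hu]
  set s : ℕ := n - 2*u with hs
  by_cases hmid : s*s ≤ 16*t*t*n
  · -- middle region: crude absolute bound
    have h1 : ∀ a ∈ Finset.range (t+1),
        -((((16*t*t)^t * n^t : ℕ)) : ℤ) ≤ (-1:ℤ)^a * (u.choose a) * (s.choose (2*t-2*a)) := by
      intro a ha
      simp only [Finset.mem_range] at ha
      have hb := term_bound t u s n a ht (by omega) (by omega) hmid
      have hble : ((u.choose a : ℤ)) * (s.choose (2*t-2*a)) ≤ (((16*t*t)^t * n^t : ℕ) : ℤ) := by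
        exact_mod_cast Nat.cast_le.2 hb
      have hnn : (0:ℤ) ≤ (u.choose a : ℤ) * (s.choose (2*t-2*a)) := by positivity
      rcases neg_one_pow_eq_or ℤ a with h | h
      · rw [h]; linarith
      · rw [h]; linarith
    calc -( ((t+1) * ((16*t*t)^t * n^t) : ℕ) : ℤ)
        = ∑ _a ∈ Finset.range (t+1), -((((16*t*t)^t * n^t : ℕ)) : ℤ) := by
          rw [Finset.sum_const, Finset.card_range]
          push_cast
          ring
      _ ≤ ∑ a ∈ Finset.range (t+1), (-1:ℤ)^a * (u.choose a) * (s.choose (2*t-2*a)) :=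
          Finset.sum_le_sum h1
  · -- outer region: alternating sum is nonnegative
    push_neg at hmid
    have halt := alt_sum (t+1) (fun a => ((u.choose a * s.choose (2*t-2*a) : ℕ) : ℤ))
      (fun a _ => by positivity)
      (fun a ha => by
        exact_mod_cast Nat.cast_le.2 (T_mono t u s n a ht hn (by omega) hmid (by omega)))
    have heq : ∑ a ∈ Finset.range (t+1), (-1:ℤ)^a * (u.choose a) * (s.choose (2*t-2*a))
        = ∑ a ∈ Finset.range (t+1), (-1:ℤ)^a * ((u.choose a * s.choose (2*t-2*a) : ℕ) : ℤ) := by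
      refine Finset.sum_congr rfl fun a _ => ?_
      push_cast
      ring
    rw [heq]
    refine le_trans ?_ halt.1
    have : (0:ℤ) ≤ (((t+1) * ((16*t*t)^t * n^t) : ℕ) : ℤ) := by positivity
    linarith

theorem kraw_lower_bound_fixed_j (j : ℕ) (hj2 : 2 ≤ j) (hje : Even j) :
    ∃ C : ℝ, 0 < C ∧ ∃ N : ℕ, ∀ n : ℕ, N ≤ n → ∀ w : ℕ, w ≤ n →
      krawF n j (w : ℝ) ≥ -C * (n : ℝ) ^ (j / 2) := by
  obtain ⟨t, htj⟩ := hje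
  have hj : j = 2*t := by omega
  subst hj
  have ht : 1 ≤ t := by omega
  refine ⟨(((t+1) * ((16*t*t)^t) : ℕ) : ℝ), ?_, 1, ?_⟩
  · have : 0 < (t+1) * ((16*t*t)^t) := Nat.mul_pos (by omega) (pow_pos (by nlinarith) t)
    exact_mod_cast this
  intro n hn w hwn
  have hdiv : 2*t/2 = t := by omega
  rw [hdiv]
  -- reduce to the case 2*u ≤ n
  have key : ∀ u : ℕ, 2*u ≤ n → ((Kz n (2*t) u : ℤ) : ℝ) ≥
      -(((t+1) * ((16*t*t)^t) : ℕ) : ℝ) * (n:ℝ)^t := by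
    intro u hu
    have h := Kz_main t n u ht hn hu
    have hcast : (((t+1) * ((16*t*t)^t * n^t) : ℕ) : ℝ)
        = (((t+1) * ((16*t*t)^t) : ℕ) : ℝ) * (n:ℝ)^t := by push_cast; ring
    have : ((-( ((t+1) * ((16*t*t)^t * n^t) : ℕ) : ℤ)) : ℝ) ≤ ((Kz n (2*t) u : ℤ) : ℝ) := by exact_mod_cast h
    rw [ge_iff_le, neg_mul, ← hcast]
    push_cast at this ⊢
    linarith
  rcases le_or_gt (2*w) n with hcase | hcase
  · rw [krawF_eq n (2*t) w hwn]
    exact key w hcase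
  · have hw2 : n - w ≤ n := by omega
    have hsym : Kz n (2*t) w = Kz n (2*t) (n - w) := by
      have := Kz_symm n (2*t) (n - w) hw2 ⟨t, by omega⟩
      rw [Nat.sub_sub_self hwn] at this
      exact this
    rw [krawF_eq n (2*t) w hwn, hsym]
    exact key (n - w) (by omega)
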